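/- arXiv:1407.5206 — 5 statements merged into one kernel-verified Lean document; each statement's English description precedes it below -/
import Mathlib

section
/- Let R be a ring, M an R-module, Γ = End(M)^op, F = Hom(M,-) and G = M ⊗_Γ -. If N is an R-module such that both N and Ω_M(N) (the kernel of a right M-approximation M' → N) are generated by M, then the counit μ_N : M ⊗_Γ Hom(M,N) → N is an isomorphism (i.e. N is M-static). -/
open TensorProduct LinearMap

section StaticDefs
variable (R : Type) [Ring R] (M : Type) [AddCommGroup M] [Module R M]
variable (N : Type) [AddCommGroup N] [Module R N]

/-- The evaluation map `M ⊗[ℤ] Hom_R(M,N) → N`. -/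
noncomputable def evalTensor : (M ⊗[ℤ] (M →ₗ[R] N)) →ₗ[ℤ] N :=
  TensorProduct.lift (LinearMap.mk₂ ℤ (fun m f => f m)
    (fun m m' f => by simp) (fun z m f => by simp)
    (fun m f g => rfl) (fun z m f => rfl))

/-- The subgroup of relations defining `M ⊗_{End(M)ᵒᵖ} Hom(M,N)` as a quotient
of `M ⊗[ℤ] Hom(M,N)`. -/
noncomputable def staticRel : AddSubgroup (M ⊗[ℤ] (M →ₗ[R] N)) :=
  AddSubgroup.closure {x | ∃ (e : M →ₗ[R] M) (m : M) (f : M →ₗ[R] N),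
    x = e m ⊗ₜ[ℤ] f - m ⊗ₜ[ℤ] (f ∘ₗ e)}

/-- `N` is `M`-static: the canonical map `μ_N : M ⊗_{End(M)ᵒᵖ} Hom(M,N) → N`
is an isomorphism; equivalently (since the relations are contained in the kernel of
evaluation), the evaluation map is surjective and its kernel consists of relations. -/
def IsStatic : Prop :=
  Function.Surjective (evalTensor R M N) ∧
    ∀ x, evalTensor R M N x = 0 → x ∈ staticRel R M N

/-- `M'` belongs to `add M`: it is a direct summand of a finite direct sum of copies of `M`. -/
def InAdd (M' : Type) [AddCommGroup M'] [Module R M'] : Prop :=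
  ∃ (n : ℕ) (i : M' →ₗ[R] (Fin n → M)) (p : (Fin n → M) →ₗ[R] M'),
    p ∘ₗ i = LinearMap.id

/-- `N` is generated by `M`: an epimorphic image of a finite direct sum of copies of `M`. -/
def GeneratedBy : Prop :=
  ∃ (n : ℕ) (g : (Fin n → M) →ₗ[R] N), Function.Surjective g

end StaticDefs

/-!
For `g : Mⁿ → N` and `v : Mⁿ`, the element `∑ⱼ vⱼ ⊗ (g ∘ ιⱼ)` evaluates to `g v`, so `μ_N` is
onto when `M` generates `N`. If `p ∘ i = id` for `i : M' → Mⁿ`, `p : Mⁿ → M'`, every `y ∈ M ⊗ Hom(M,M')` is congruent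
modulo relations to this element for `g = p` and `v = i (eval y)`, so `μ_{M'}` is injective.
An approximation `q : M' → N` makes `M ⊗ Hom(M,M') → M ⊗ Hom(M,N)` onto. Lift a kernel element
of `μ_N` to `y`; then `eval y ∈ ker q = range g`, say `eval y = g v`, and subtracting
`∑ⱼ vⱼ ⊗ (g ∘ ιⱼ)`, which `q` kills, puts `y` in the kernel of `μ_{M'}`, i.e. among the
relations.
-/

namespace StaticModule

variable (R : Type) [Ring R] (M : Type) [AddCommGroup M] [Module R M]
variable {M' N : Type} [AddCommGroup M'] [Module R M'] [AddCommGroup N] [Module R N]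

@[simp] lemma evalTensor_tmul (m : M) (f : M →ₗ[R] N) :
    evalTensor R M N (m ⊗ₜ[ℤ] f) = f m := rfl

lemma tmul_comp_sub_tmul_mem_staticRel (e : M →ₗ[R] M) (m : M) (f : M →ₗ[R] N) :
    m ⊗ₜ[ℤ] (f ∘ₗ e) - e m ⊗ₜ[ℤ] f ∈ staticRel R M N := by
  rw [← neg_sub]
  exact neg_mem (AddSubgroup.subset_closure ⟨e, m, f, rfl⟩)

/-- The canonical form `∑ⱼ vⱼ ⊗ (g ∘ ιⱼ)` of `v : Mⁿ` along `g : Mⁿ → N`. -/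
noncomputable def piTensor {n : ℕ} (g : (Fin n → M) →ₗ[R] N) :
    (Fin n → M) →ₗ[ℤ] M ⊗[ℤ] (M →ₗ[R] N) :=
  ∑ j, (TensorProduct.mk ℤ M (M →ₗ[R] N)).flip (g ∘ₗ single R (fun _ => M) j) ∘ₗ proj j

variable {R M}

lemma piTensor_apply {n : ℕ} (g : (Fin n → M) →ₗ[R] N) (v : Fin n → M) :
    piTensor R M g v = ∑ j, v j ⊗ₜ[ℤ] (g ∘ₗ single R (fun _ => M) j) := by
  rw [piTensor, LinearMap.sum_apply]
  rfl

@[simp] lemma piTensor_zero {n : ℕ} : piTensor R M (0 : (Fin n → M) →ₗ[R] N) = 0 := by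
  ext v
  simp [piTensor_apply]

lemma evalTensor_piTensor {n : ℕ} (g : (Fin n → M) →ₗ[R] N) (v : Fin n → M) :
    evalTensor R M N (piTensor R M g v) = g v := by
  simp only [piTensor_apply, map_sum, evalTensor_tmul, comp_apply, single_apply]
  rw [← map_sum, Finset.univ_sum_single]

lemma evalTensor_surjective_of_generatedBy (hN : GeneratedBy R M N) :
    Function.Surjective (evalTensor R M N) := by
  obtain ⟨n, g, hg⟩ := hN
  intro b
  obtain ⟨v, rfl⟩ := hg b
  exact ⟨piTensor R M g v, evalTensor_piTensor g v⟩

lemma tmul_comp_sub_piTensor_mem_staticRel {n : ℕ} (g : (Fin n → M) →ₗ[R] N)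
    (f : M →ₗ[R] (Fin n → M)) (m : M) :
    m ⊗ₜ[ℤ] (g ∘ₗ f) - piTensor R M g (f m) ∈ staticRel R M N := by
  have hf : g ∘ₗ f = ∑ j, (g ∘ₗ single R (fun _ => M) j) ∘ₗ (proj j ∘ₗ f) := by
    ext x
    simp only [LinearMap.comp_apply, LinearMap.sum_apply, proj_apply, LinearMap.single_apply]
    rw [← map_sum, Finset.univ_sum_single]
  rw [hf, tmul_sum, piTensor_apply, ← Finset.sum_sub_distrib]
  exact sum_mem fun j _ => tmul_comp_sub_tmul_mem_staticRel R M _ m _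

lemma mem_staticRel_of_evalTensor_eq_zero_of_inAdd (hM' : InAdd R M M')
    {y : M ⊗[ℤ] (M →ₗ[R] M')} (hy : evalTensor R M M' y = 0) :
    y ∈ staticRel R M M' := by
  obtain ⟨n, i, p, hpi⟩ := hM'
  let δ := LinearMap.id - piTensor R M p ∘ₗ i.restrictScalars ℤ ∘ₗ evalTensor R M M'
  suffices hδ : ∀ y, δ y ∈ staticRel R M M' by simpa [δ, hy] using hδ y
  intro y
  induction y using TensorProduct.induction_on with
  | zero => simp
  | tmul m f =>
      have := tmul_comp_sub_piTensor_mem_staticRel p (i ∘ₗ f) m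
      rwa [← comp_assoc, hpi, id_comp] at this
  | add y z hy hz => simpa only [map_add] using add_mem hy hz

variable (M)

noncomputable def compTensor (q : M' →ₗ[R] N) :
    M ⊗[ℤ] (M →ₗ[R] M') →ₗ[ℤ] M ⊗[ℤ] (M →ₗ[R] N) :=
  lTensor M (compRight ℤ q)

variable {M}

@[simp] lemma compTensor_tmul (q : M' →ₗ[R] N) (m : M) (f : M →ₗ[R] M') :
    compTensor M q (m ⊗ₜ[ℤ] f) = m ⊗ₜ[ℤ] (q ∘ₗ f) := rfl

lemma evalTensor_compTensor (q : M' →ₗ[R] N) (y : M ⊗[ℤ] (M →ₗ[R] M')) :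
    evalTensor R M N (compTensor M q y) = q (evalTensor R M M' y) := by
  induction y using TensorProduct.induction_on with
  | zero => simp
  | tmul m f => simp
  | add y z hy hz => simp only [map_add, hy, hz]

lemma compTensor_piTensor {n : ℕ} (q : M' →ₗ[R] N) (g : (Fin n → M) →ₗ[R] M')
    (v : Fin n → M) :
    compTensor M q (piTensor R M g v) = piTensor R M (q ∘ₗ g) v := by
  simp only [piTensor_apply, map_sum, compTensor_tmul, comp_assoc]

lemma compTensor_surjective (q : M' →ₗ[R] N)
    (happrox : ∀ g : M →ₗ[R] N, ∃ g' : M →ₗ[R] M', q ∘ₗ g' = g) :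
    Function.Surjective (compTensor M q) :=
  lTensor_surjective M fun g => (happrox g).imp fun _ => id

lemma compTensor_mem_staticRel (q : M' →ₗ[R] N) {y : M ⊗[ℤ] (M →ₗ[R] M')}
    (hy : y ∈ staticRel R M M') : compTensor M q y ∈ staticRel R M N := by
  suffices staticRel R M M' ≤ (staticRel R M N).comap (compTensor M q).toAddMonoidHom from
    this hy
  refine (AddSubgroup.closure_le _).mpr ?_
  rintro _ ⟨e, m, f, rfl⟩
  simpa only [SetLike.mem_coe, AddSubgroup.mem_comap, toAddMonoidHom_coe, map_sub,
    compTensor_tmul, comp_assoc, neg_sub] using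
    neg_mem (tmul_comp_sub_tmul_mem_staticRel R M e m (q ∘ₗ f))

end StaticModule

open StaticModule in
/-- If `N` and the kernel `Ω_M(N)` of a right `M`-approximation
`q : M' → N` are both generated by `M`, then `N` is `M`-static. -/
theorem static_of_generated_of_omega_generated
    (R : Type) [Ring R] (M M' N : Type)
    [AddCommGroup M] [Module R M] [AddCommGroup M'] [Module R M']
    [AddCommGroup N] [Module R N]
    (q : M' →ₗ[R] N)
    (hM' : InAdd R M M')
    (happrox : ∀ g : M →ₗ[R] N, ∃ g' : M →ₗ[R] M', q ∘ₗ g' = g)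
    (hNgen : GeneratedBy R M N)
    (hΩgen : ∃ (n : ℕ) (g : (Fin n → M) →ₗ[R] M'),
      LinearMap.range g = LinearMap.ker q) :
    IsStatic R M N := by
  refine ⟨evalTensor_surjective_of_generatedBy hNgen, fun x hx => ?_⟩
  obtain ⟨y, rfl⟩ := compTensor_surjective q happrox x
  obtain ⟨n, g, hg⟩ := hΩgen
  have hqg : q ∘ₗ g = 0 := range_le_ker_iff.mp hg.le
  obtain ⟨v, hv⟩ : evalTensor R M M' y ∈ range g := by
    rw [hg, mem_ker, ← evalTensor_compTensor]
    exact hx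
  have hyv : y - piTensor R M g v ∈ staticRel R M M' :=
    mem_staticRel_of_evalTensor_eq_zero_of_inAdd hM' (by
      rw [map_sub, evalTensor_piTensor, hv, sub_self])
  have := compTensor_mem_staticRel q hyv
  rwa [map_sub, compTensor_piTensor, hqg, piTensor_zero, LinearMap.zero_apply, sub_zero] at this
end

section
/- Let R be a ring, M an R-module with endomorphism ring Γ = End(M)^op. If there is an exact sequence M'' → M' → N → 0 with M', M'' ∈ add M which remains exact after applying Hom(M,-), then the counit μ_N : M ⊗_Γ Hom(M,N) → N is an isomorphism. -/
/-! For `A ∈ add M` write `id_A = ∑ aⱼ ∘ bⱼ` through `M`: this makes the evaluation `μ_A` onto and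
reduces its kernel to tensors over `Hom(M, M)`, where `t ≡ μ(t) ⊗ id` modulo relations. For `N`,
every tensor is the image of one over `M'` since `Hom(M, M') → Hom(M, N)` is onto. If its
evaluation vanishes, it lies in `ker q = im f`; subtracting the image of a tensor over `M''` with
the same evaluation leaves a relation over `M'`, whose image in `N` is the given tensor since
`q ∘ f = 0`. -/

open TensorProduct LinearMap

section HomTensor

variable (R : Type) [Ring R] (M : Type) [AddCommGroup M] [Module R M]
variable {A B C : Type} [AddCommGroup A] [Module R A] [AddCommGroup B] [Module R B]
  [AddCommGroup C] [Module R C]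

noncomputable def tensorHomMap (g : A →ₗ[R] B) :
    M ⊗[ℤ] (M →ₗ[R] A) →ₗ[ℤ] M ⊗[ℤ] (M →ₗ[R] B) :=
  (LinearMap.compRight ℤ g).lTensor M

@[simp] lemma tensorHomMap_tmul (g : A →ₗ[R] B) (m : M) (h : M →ₗ[R] A) :
    tensorHomMap R M g (m ⊗ₜ h) = m ⊗ₜ (g ∘ₗ h) := rfl

@[simp] lemma evalTensor_tmul (m : M) (h : M →ₗ[R] A) :
    evalTensor R M A (m ⊗ₜ h) = h m := rfl

lemma tensorHomMap_id (t : M ⊗[ℤ] (M →ₗ[R] A)) : tensorHomMap R M LinearMap.id t = t := by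
  induction t using TensorProduct.induction_on with
  | zero => simp
  | tmul m h => simp
  | add x y hx hy => simp [hx, hy]

lemma tensorHomMap_comp (g : A →ₗ[R] B) (g' : B →ₗ[R] C) (t : M ⊗[ℤ] (M →ₗ[R] A)) :
    tensorHomMap R M (g' ∘ₗ g) t = tensorHomMap R M g' (tensorHomMap R M g t) := by
  induction t using TensorProduct.induction_on with
  | zero => simp
  | tmul m h => simp [LinearMap.comp_assoc]
  | add x y hx hy => simp [hx, hy]

lemma tensorHomMap_zero (t : M ⊗[ℤ] (M →ₗ[R] A)) :
    tensorHomMap R M (0 : A →ₗ[R] B) t = 0 := by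
  induction t using TensorProduct.induction_on with
  | zero => simp
  | tmul m h => simp
  | add x y hx hy => simp [hx, hy]

lemma tensorHomMap_sum {ι : Type*} (s : Finset ι) (g : ι → A →ₗ[R] B)
    (t : M ⊗[ℤ] (M →ₗ[R] A)) :
    tensorHomMap R M (∑ j ∈ s, g j) t = ∑ j ∈ s, tensorHomMap R M (g j) t := by
  induction t using TensorProduct.induction_on with
  | zero => simp
  | tmul m h =>
    have hsum : (∑ j ∈ s, g j) ∘ₗ h = ∑ j ∈ s, g j ∘ₗ h := by ext; simp
    simp [hsum, TensorProduct.tmul_sum]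
  | add x y hx hy => simp [hx, hy, Finset.sum_add_distrib]

lemma evalTensor_tensorHomMap (g : A →ₗ[R] B) (t : M ⊗[ℤ] (M →ₗ[R] A)) :
    evalTensor R M B (tensorHomMap R M g t) = g (evalTensor R M A t) := by
  induction t using TensorProduct.induction_on with
  | zero => simp
  | tmul m h => simp
  | add x y hx hy => simp [hx, hy]

lemma InAdd.exists_sum_comp_eq_id (hA : InAdd R M A) :
    ∃ (n : ℕ) (a : Fin n → M →ₗ[R] A) (b : Fin n → A →ₗ[R] M),
      ∑ j, a j ∘ₗ b j = LinearMap.id := by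
  obtain ⟨n, i, p, hpi⟩ := hA
  refine ⟨n, fun j => p ∘ₗ LinearMap.single R (fun _ => M) j, fun j => LinearMap.proj j ∘ₗ i, ?_⟩
  ext x
  simpa [← map_sum, Finset.univ_sum_single] using LinearMap.congr_fun hpi x

lemma tensorHomMap_mem_staticRel (g : A →ₗ[R] B) {t : M ⊗[ℤ] (M →ₗ[R] A)}
    (ht : t ∈ staticRel R M A) : tensorHomMap R M g t ∈ staticRel R M B := by
  suffices staticRel R M A ≤ (staticRel R M B).comap (tensorHomMap R M g).toAddMonoidHom from
    this ht
  rw [staticRel, AddSubgroup.closure_le]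
  rintro _ ⟨e, m, h, rfl⟩
  simp only [SetLike.mem_coe, AddSubgroup.mem_comap, LinearMap.toAddMonoidHom_coe, map_sub,
    tensorHomMap_tmul, ← LinearMap.comp_assoc]
  exact AddSubgroup.subset_closure ⟨e, m, g ∘ₗ h, rfl⟩

lemma evalTensor_surjective_of_inAdd (hA : InAdd R M A) :
    Function.Surjective (evalTensor R M A) := by
  obtain ⟨n, a, b, hab⟩ := hA.exists_sum_comp_eq_id
  intro x
  refine ⟨∑ j, b j x ⊗ₜ a j, ?_⟩
  simpa using LinearMap.congr_fun hab x

lemma sub_evalTensor_tmul_id_mem_staticRel (t : M ⊗[ℤ] (M →ₗ[R] M)) :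
    t - evalTensor R M M t ⊗ₜ LinearMap.id ∈ staticRel R M M := by
  induction t using TensorProduct.induction_on with
  | zero => simp [zero_mem]
  | tmul m e =>
    have hrel : e m ⊗ₜ LinearMap.id - m ⊗ₜ (LinearMap.id ∘ₗ e) ∈ staticRel R M M :=
      AddSubgroup.subset_closure ⟨e, m, LinearMap.id, rfl⟩
    simpa using neg_mem hrel
  | add x y hx hy =>
    rw [map_add, TensorProduct.add_tmul, add_sub_add_comm]
    exact add_mem hx hy

lemma mem_staticRel_of_inAdd (hA : InAdd R M A) {t : M ⊗[ℤ] (M →ₗ[R] A)}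
    (ht : evalTensor R M A t = 0) : t ∈ staticRel R M A := by
  obtain ⟨n, a, b, hab⟩ := hA.exists_sum_comp_eq_id
  have hdecomp : t = ∑ j, tensorHomMap R M (a j) (tensorHomMap R M (b j) t) := by
    conv_lhs => rw [← tensorHomMap_id R M t, ← hab, tensorHomMap_sum]
    simp only [tensorHomMap_comp]
  rw [hdecomp]
  refine sum_mem fun j _ => tensorHomMap_mem_staticRel R M (a j) ?_
  simpa [evalTensor_tensorHomMap, ht] using
    sub_evalTensor_tmul_id_mem_staticRel R M (tensorHomMap R M (b j) t)

lemma tensorHomMap_surjective {g : A →ₗ[R] B}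
    (hg : ∀ h : M →ₗ[R] B, ∃ h' : M →ₗ[R] A, g ∘ₗ h' = h) :
    Function.Surjective (tensorHomMap R M g) := by
  rw [← LinearMap.range_eq_top, eq_top_iff]
  refine (TensorProduct.span_tmul_eq_top ℤ M (M →ₗ[R] B)).ge.trans (Submodule.span_le.mpr ?_)
  rintro _ ⟨m, h, rfl⟩
  obtain ⟨h', rfl⟩ := hg h
  exact ⟨m ⊗ₜ h', rfl⟩

end HomTensor

theorem static_of_hom_exact_presentation_general
    (R : Type) [Ring R] (M M'' M' N : Type)
    [AddCommGroup M] [Module R M] [AddCommGroup M''] [Module R M'']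
    [AddCommGroup M'] [Module R M'] [AddCommGroup N] [Module R N]
    (f : M'' →ₗ[R] M') (q : M' →ₗ[R] N)
    (hM'' : InAdd R M M'') (hM' : InAdd R M M')
    (hq : Function.Surjective q)
    (hex : LinearMap.range f = LinearMap.ker q)
    (hHomSurj : ∀ g : M →ₗ[R] N, ∃ g' : M →ₗ[R] M', q ∘ₗ g' = g) :
    IsStatic R M N := by
  have hqf : q ∘ₗ f = 0 := LinearMap.range_le_ker_iff.mp hex.le
  refine ⟨?_, fun x hx => ?_⟩
  · refine Function.Surjective.of_comp (g := tensorHomMap R M q) ?_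
    have hcomm : evalTensor R M N ∘ tensorHomMap R M q = q ∘ evalTensor R M M' :=
      funext (evalTensor_tensorHomMap R M q)
    exact hcomm ▸ hq.comp (evalTensor_surjective_of_inAdd R M hM')
  · obtain ⟨y, rfl⟩ := tensorHomMap_surjective R M hHomSurj x
    obtain ⟨m'', hm''⟩ : evalTensor R M M' y ∈ LinearMap.range f := by
      rwa [hex, LinearMap.mem_ker, ← evalTensor_tensorHomMap]
    obtain ⟨z, rfl⟩ := evalTensor_surjective_of_inAdd R M hM'' m''
    have hy : y - tensorHomMap R M f z ∈ staticRel R M M' :=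
      mem_staticRel_of_inAdd R M hM' (by simp [evalTensor_tensorHomMap, hm''])
    simpa [← tensorHomMap_comp, hqf, tensorHomMap_zero] using tensorHomMap_mem_staticRel R M q hy

/-- If there is an exact sequence `M'' → M' → N → 0` with
`M', M'' ∈ add M` which remains exact after applying `Hom(M,-)`, then `N` is `M`-static. -/
theorem static_of_hom_exact_presentation
    (R : Type) [Ring R] (M M'' M' N : Type)
    [AddCommGroup M] [Module R M] [AddCommGroup M''] [Module R M'']
    [AddCommGroup M'] [Module R M'] [AddCommGroup N] [Module R N]
    (f : M'' →ₗ[R] M') (q : M' →ₗ[R] N)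
    (hM'' : InAdd R M M'') (hM' : InAdd R M M')
    (hq : Function.Surjective q)
    (hex : LinearMap.range f = LinearMap.ker q)
    (hHomSurj : ∀ g : M →ₗ[R] N, ∃ g' : M →ₗ[R] M', q ∘ₗ g' = g)
    (hHomExact : ∀ g' : M →ₗ[R] M', q ∘ₗ g' = 0 →
      ∃ g'' : M →ₗ[R] M'', f ∘ₗ g'' = g') :
    IsStatic R M N :=
  static_of_hom_exact_presentation_general R M M'' M' N f q hM'' hM' hq hex hHomSurj
end

section
/- Let R be a ring, M an R-module, Γ = End(M)^op. For every finitely presented Γ-module X admitting a projective presentation P_1 → P_0 → X → 0 with P_0, P_1 finitely generated projective, if the image of the induced map M ⊗ P_1 → M ⊗ P_0 in mod R stays exact under Hom(M,-), then the unit ν_X : X → Hom(M, M ⊗_Γ X) is an isomorphism. -/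
open TensorProduct LinearMap

section AdstaticDefs
variable (R : Type) [Ring R] (M : Type) [AddCommGroup M] [Module R M]

/-- The relations defining `M ⊗_{Γ(M)} X` as a quotient of `M ⊗[ℤ] X`,
where `Γ(M) = End_R(M)ᵒᵖ`. (The relation set is stable under the `R`-action
on the left tensor factor, so the `R`-span agrees with the additive closure.) -/
noncomputable def adRel (X : Type) [AddCommGroup X]
    [Module (Module.End R M)ᵐᵒᵖ X] : Submodule R (M ⊗[ℤ] X) :=
  Submodule.span R {y | ∃ (e : Module.End R M) (m : M) (x : X),
    y = e m ⊗ₜ[ℤ] x - m ⊗ₜ[ℤ] ((MulOpposite.op e) • x)}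

/-- `M ⊗_{Γ(M)} X`, realized as a quotient of `M ⊗[ℤ] X`, as an `R`-module. -/
noncomputable def TensorOver (X : Type) [AddCommGroup X]
    [Module (Module.End R M)ᵐᵒᵖ X] : Type :=
  (M ⊗[ℤ] X) ⧸ adRel R M X

noncomputable instance (X : Type) [AddCommGroup X] [Module (Module.End R M)ᵐᵒᵖ X] :
    AddCommGroup (TensorOver R M X) :=
  inferInstanceAs (AddCommGroup ((M ⊗[ℤ] X) ⧸ adRel R M X))

noncomputable instance (X : Type) [AddCommGroup X] [Module (Module.End R M)ᵐᵒᵖ X] :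
    Module R (TensorOver R M X) :=
  inferInstanceAs (Module R ((M ⊗[ℤ] X) ⧸ adRel R M X))

/-- The unit `ν_X : X → Hom_R(M, M ⊗_{Γ(M)} X)`, `x ↦ (m ↦ m ⊗ x)`. -/
noncomputable def adUnit (X : Type) [AddCommGroup X]
    [Module (Module.End R M)ᵐᵒᵖ X] (x : X) : M →ₗ[R] TensorOver R M X where
  toFun := fun m => Submodule.Quotient.mk (m ⊗ₜ[ℤ] x)
  map_add' := by
    intro m m'
    show Submodule.Quotient.mk ((m + m') ⊗ₜ[ℤ] x) = _
    rw [TensorProduct.add_tmul]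
    rfl
  map_smul' := by
    intro r m
    show Submodule.Quotient.mk ((r • m) ⊗ₜ[ℤ] x) = _
    rw [← TensorProduct.smul_tmul']
    rfl

/-- The induced `R`-linear map `M ⊗_{Γ(M)} X → M ⊗_{Γ(M)} Y` of a `Γ(M)`-linear map. -/
noncomputable def tensorOverMap (X Y : Type) [AddCommGroup X]
    [Module (Module.End R M)ᵐᵒᵖ X] [AddCommGroup Y] [Module (Module.End R M)ᵐᵒᵖ Y]
    (φ : X →ₗ[(Module.End R M)ᵐᵒᵖ] Y) :
    TensorOver R M X →ₗ[R] TensorOver R M Y :=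
  Submodule.mapQ (adRel R M X) (adRel R M Y)
    (TensorProduct.AlgebraTensorModule.map (LinearMap.id : M →ₗ[R] M)
      (φ.toAddMonoidHom.toIntLinearMap))
    (by
      refine Submodule.span_le.2 ?_
      rintro y ⟨e, m, x, rfl⟩
      simp only [SetLike.mem_coe, Submodule.mem_comap, map_sub,
        TensorProduct.AlgebraTensorModule.map_tmul, LinearMap.id_apply,
        AddMonoidHom.coe_toIntLinearMap, LinearMap.toAddMonoidHom_coe]
      have : φ ((MulOpposite.op e) • x) = (MulOpposite.op e) • φ x := map_smul φ _ _
      rw [this]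
      exact Submodule.subset_span ⟨e, m, φ x, rfl⟩)

end AdstaticDefs

/-!
`ν` is natural in `X`, and for a finitely generated projective `Γ`-module `P` with dual basis
`(xᵢ, fᵢ)` it has the explicit inverse `h ↦ ∑ᵢ (ε ∘ (M ⊗ fᵢ) ∘ h) • xᵢ`, where
`ε : M ⊗_Γ Γ → M` is the unitor; so `ν_{P₀}` and `ν_{P₁}` are bijective. The hypotheses say
that `Hom_R(M, M ⊗_Γ -)` carries the presentation `P₁ → P₀ → X → 0` to a right exact row,
and the four lemma for the map of rows `ν` gives that `ν_X` is bijective.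
-/

theorem Module.Finite.exists_dual_basis_of_projective (A P : Type*) [Semiring A]
    [AddCommMonoid P] [Module A P] [Module.Finite A P] [Module.Projective A P] :
    ∃ (n : ℕ) (x : Fin n → P) (f : Fin n → P →ₗ[A] A), ∀ p, ∑ i, f i p • x i = p := by
  obtain ⟨n, π, s, -, -, hπs⟩ := Module.Finite.exists_comp_eq_id_of_projective A P
  refine ⟨n, fun i => π (Pi.single i 1), fun i => LinearMap.proj i ∘ₗ s, fun p => ?_⟩
  calc ∑ i, s p i • π (Pi.single i 1) = π (∑ i, s p i • Pi.single i 1) := by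
        simp only [map_sum, map_smul]
    _ = π (s p) := by
        congr 1
        ext j
        simp [Pi.single_apply]
    _ = p := LinearMap.congr_fun hπs p

section
variable {R : Type} [Ring R] {M : Type} [AddCommGroup M] [Module R M]
  {X Y Z : Type} [AddCommGroup X] [Module (Module.End R M)ᵐᵒᵖ X]
  [AddCommGroup Y] [Module (Module.End R M)ᵐᵒᵖ Y] [AddCommGroup Z] [Module (Module.End R M)ᵐᵒᵖ Z]

local notation "Γ" => (Module.End R M)ᵐᵒᵖ

theorem adUnit_add (x y : X) : adUnit R M X (x + y) = adUnit R M X x + adUnit R M X y := by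
  ext m
  exact congrArg Submodule.Quotient.mk (tmul_add m x y)

variable (R M X) in
noncomputable def adUnitHom : X →+ (M →ₗ[R] TensorOver R M X) :=
  AddMonoidHom.mk' (adUnit R M X) adUnit_add

theorem adUnitHom_apply (x : X) : adUnitHom R M X x = adUnit R M X x :=
  rfl

theorem adUnit_smul (e : Module.End R M) (x : X) :
    adUnit R M X (MulOpposite.op e • x) = adUnit R M X x ∘ₗ e := by
  ext m
  refine ((Submodule.Quotient.eq (adRel R M X)).2 ?_).symm
  exact Submodule.subset_span ⟨e, m, x, rfl⟩

theorem tensorOverMap_comp_adUnit (φ : X →ₗ[Γ] Y) (x : X) :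
    tensorOverMap R M X Y φ ∘ₗ adUnit R M X x = adUnit R M Y (φ x) :=
  rfl

theorem TensorOver.ext {N : Type} [AddCommGroup N] [Module R N]
    {f g : TensorOver R M X →ₗ[R] N} (h : ∀ x m, f (adUnit R M X x m) = g (adUnit R M X x m)) :
    f = g := by
  apply Submodule.linearMap_qext
  ext m x
  exact h x m

theorem tensorOverMap_comp_eq_zero {φ : X →ₗ[Γ] Y} {ψ : Y →ₗ[Γ] Z} (h : ψ ∘ₗ φ = 0) :
    tensorOverMap R M Y Z ψ ∘ₗ tensorOverMap R M X Y φ = 0 :=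
  TensorOver.ext fun x m => by
    change adUnit R M Z ((ψ ∘ₗ φ) x) m = 0
    rw [h, LinearMap.zero_apply, ← adUnitHom_apply, map_zero, LinearMap.zero_apply]

variable (R M) in
noncomputable def TensorOver.rid : TensorOver R M Γ →ₗ[R] M :=
  Submodule.liftQ _
    (AlgebraTensorModule.lift (LinearMap.mk₂' R ℤ (fun (m : M) (γ : Γ) => γ.unop m)
      (fun _ _ _ => map_add _ _ _) (fun _ _ _ => map_smul _ _ _)
      (fun _ _ _ => rfl) (fun _ _ _ => by simp)))
    (Submodule.span_le.2 <| by
      rintro _ ⟨e, m, γ, rfl⟩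
      simp)

theorem TensorOver.rid_comp_adUnit (γ : Γ) : TensorOver.rid R M ∘ₗ adUnit R M Γ γ = γ.unop :=
  rfl

theorem sum_adUnit_comp_rid_comp_tensorOverMap {ι : Type} [Fintype ι] {x : ι → X}
    {f : ι → X →ₗ[Γ] Γ} (hdual : ∀ y, ∑ i, f i y • x i = y) :
    ∑ i, adUnit R M X (x i) ∘ₗ TensorOver.rid R M ∘ₗ tensorOverMap R M X Γ (f i) =
      LinearMap.id := by
  refine TensorOver.ext fun y m => ?_
  calc _ = ∑ i, adUnit R M X (f i y • x i) m := by
        rw [LinearMap.sum_apply]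
        refine Finset.sum_congr rfl fun i _ => ?_
        rw [← MulOpposite.op_unop (f i y), adUnit_smul]
        rfl
    _ = adUnit R M X (∑ i, f i y • x i) m := by
        rw [← adUnitHom_apply, map_sum, LinearMap.sum_apply]
        rfl
    _ = _ := by rw [hdual]; rfl

theorem adUnit_bijective_of_dual_basis {ι : Type} [Fintype ι] (x : ι → X) (f : ι → X →ₗ[Γ] Γ)
    (hdual : ∀ y, ∑ i, f i y • x i = y) : Function.Bijective (adUnit R M X) := by
  refine Function.bijective_iff_has_inverse.2
    ⟨fun h => ∑ i, MulOpposite.op (TensorOver.rid R M ∘ₗ tensorOverMap R M X Γ (f i) ∘ₗ h) • x i,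
      fun y => ?_, fun h => ?_⟩
  · simp only [tensorOverMap_comp_adUnit, TensorOver.rid_comp_adUnit, MulOpposite.op_unop, hdual]
  · ext m
    refine .trans ?_ (LinearMap.congr_fun (sum_adUnit_comp_rid_comp_tensorOverMap hdual) (h m))
    rw [← adUnitHom_apply, map_sum, LinearMap.sum_apply, LinearMap.sum_apply]
    simp only [adUnitHom_apply, adUnit_smul]
    rfl

theorem adUnit_bijective_of_projective [Module.Finite Γ X] [Module.Projective Γ X] :
    Function.Bijective (adUnit R M X) := by
  obtain ⟨_, x, f, hdual⟩ := Module.Finite.exists_dual_basis_of_projective Γ X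
  exact adUnit_bijective_of_dual_basis x f hdual

end

/-- Let `Γ = End_R(M)ᵒᵖ` and let `X` be a finitely presented
`Γ`-module with a presentation `P₁ → P₀ → X → 0` by finitely generated projective
`Γ`-modules. If the induced sequence `M ⊗_Γ P₁ → M ⊗_Γ P₀ → M ⊗_Γ X → 0` stays exact
under `Hom_R(M,-)`, then the unit `ν_X : X → Hom_R(M, M ⊗_Γ X)` is an isomorphism,
i.e. `X` is `M`-adstatic. -/
theorem adstatic_of_hom_exact
    (R : Type) [Ring R] (M : Type) [AddCommGroup M] [Module R M]
    (P₁ P₀ X : Type)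
    [AddCommGroup P₁] [Module (Module.End R M)ᵐᵒᵖ P₁]
    [AddCommGroup P₀] [Module (Module.End R M)ᵐᵒᵖ P₀]
    [AddCommGroup X] [Module (Module.End R M)ᵐᵒᵖ X]
    [Module.Projective (Module.End R M)ᵐᵒᵖ P₁]
    [Module.Projective (Module.End R M)ᵐᵒᵖ P₀]
    [Module.Finite (Module.End R M)ᵐᵒᵖ P₁]
    [Module.Finite (Module.End R M)ᵐᵒᵖ P₀]
    (p : P₁ →ₗ[(Module.End R M)ᵐᵒᵖ] P₀) (q : P₀ →ₗ[(Module.End R M)ᵐᵒᵖ] X)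
    (hq : Function.Surjective q)
    (hex : LinearMap.range p = LinearMap.ker q)
    (hHomSurj : ∀ h : M →ₗ[R] TensorOver R M X,
      ∃ h₀ : M →ₗ[R] TensorOver R M P₀, (tensorOverMap R M P₀ X q) ∘ₗ h₀ = h)
    (hHomExact : ∀ h₀ : M →ₗ[R] TensorOver R M P₀,
      (tensorOverMap R M P₀ X q) ∘ₗ h₀ = 0 →
        ∃ h₁ : M →ₗ[R] TensorOver R M P₁, (tensorOverMap R M P₁ P₀ p) ∘ₗ h₁ = h₀) :
    Function.Bijective (adUnit R M X) := by
  let g₁ := LinearMap.compRight (M := M) ℤ (tensorOverMap R M P₁ P₀ p)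
  let g₂ := LinearMap.compRight (M := M) ℤ (tensorOverMap R M P₀ X q)
  have hpq : Function.Exact p q := LinearMap.exact_iff.2 hex.symm
  have hg : Function.Exact g₁ g₂ := by
    refine fun h₀ => ⟨hHomExact h₀, ?_⟩
    rintro ⟨h₁, rfl⟩
    change _ ∘ₗ _ ∘ₗ h₁ = 0
    rw [← LinearMap.comp_assoc, tensorOverMap_comp_eq_zero hpq.linearMap_comp_eq_zero,
      LinearMap.zero_comp]
  exact AddMonoidHom.bijective_of_surjective_of_bijective_of_right_exact
    p.toAddMonoidHom q.toAddMonoidHom g₁.toAddMonoidHom g₂.toAddMonoidHom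
    (adUnitHom R M P₁) (adUnitHom R M P₀) (adUnitHom R M X)
    (AddMonoidHom.ext fun y => tensorOverMap_comp_adUnit p y)
    (AddMonoidHom.ext fun y => tensorOverMap_comp_adUnit q y)
    hpq hg adUnit_bijective_of_projective.2 adUnit_bijective_of_projective hq hHomSurj
end

section
/- If M is a module over a finite-dimensional algebra Λ whose endomorphism ring is a division ring (a brick), then ab(M) = add M; more generally, if M is a finite direct sum of pairwise orthogonal bricks (Hom between distinct summands is zero), then the smallest exact abelian subcategory of mod Λ containing M equals add M, and add M is an abelian (semisimple) category. -/
open CategoryTheory Limits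

instance (priority := 100) abelian_hasFiniteBiproducts {C : Type*} [CategoryTheory.Category C] [CategoryTheory.Abelian C] :
    CategoryTheory.Limits.HasFiniteBiproducts C :=
  CategoryTheory.Limits.HasFiniteBiproducts.of_hasFiniteProducts

section CatDefs
variable {C : Type*} [Category C] [Abelian C]

/-- `X` belongs to `add M`: it is a retract of a finite direct sum of copies of `M`. -/
def CatInAdd (M X : C) : Prop :=
  ∃ (n : ℕ) (s : X ⟶ ⨁ (fun _ : Fin n => M)) (r : (⨁ (fun _ : Fin n => M)) ⟶ X),
    s ≫ r = 𝟙 X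

/-- A (strictly full) exact abelian subcategory of an abelian category:
a class of objects closed under isomorphisms, containing the zero objects and
closed under kernels, cokernels and finite direct sums. -/
structure IsExactAbelianSub (P : C → Prop) : Prop where
  iso : ∀ {X Y : C}, (X ≅ Y) → P X → P Y
  zero : ∀ Z : C, IsZero Z → P Z
  ker : ∀ {X Y : C} (f : X ⟶ Y), P X → P Y → P (kernel f)
  coker : ∀ {X Y : C} (f : X ⟶ Y), P X → P Y → P (cokernel f)
  sum : ∀ {X Y : C}, P X → P Y → P (X ⊞ Y)

/-- `ab M`: the smallest exact abelian subcategory containing `M`. -/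
def abSub (M : C) (X : C) : Prop :=
  ∀ P : C → Prop, IsExactAbelianSub P → P M → P X

/-- `G` is a projective object relative to the subcategory `P`. -/
def ProjIn (P : C → Prop) (G : C) : Prop :=
  P G ∧ ∀ (X Y : C), P X → P Y → ∀ (e : X ⟶ Y), Epi e →
    ∀ f : G ⟶ Y, ∃ g : G ⟶ X, g ≫ e = f

/-- `M` is ab-projective: projective as an object of `ab M`. -/
def AbProjective (M : C) : Prop := ProjIn (abSub M) M

/-- relative simple objects of the subcategory `P`. -/
def RelSimple (P : C → Prop) (X : C) : Prop :=
  P X ∧ ¬ IsZero X ∧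
    ∀ (Y : C) (i : Y ⟶ X), Mono i → P Y → IsZero Y ∨ IsIso i

/-- `X` has a filtration of length `n` inside the subcategory `P` whose
consecutive quotients satisfy `Q`. -/
def HasFiltration (P Q : C → Prop) (X : C) (n : ℕ) : Prop :=
  ∃ (F : Fin (n+1) → C) (g : ∀ i : Fin n, F i.castSucc ⟶ F i.succ),
    IsZero (F 0) ∧ Nonempty (F (Fin.last n) ≅ X) ∧
    ∀ i : Fin n, Mono (g i) ∧ P (F i.castSucc) ∧ P (F i.succ) ∧ Q (cokernel (g i))

/-- relative semisimple objects: finite direct sums of relative simples. -/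
def RelSemisimple (P : C → Prop) (X : C) : Prop :=
  ∃ (m : ℕ) (s : Fin m → C), (∀ i, RelSimple P (s i)) ∧ Nonempty (X ≅ ⨁ s)

end CatDefs

/-!
A nonzero map between finite direct sums of the bricks has a nonzero, hence invertible, matrix
entry `Bᵢ ⟶ Bⱼ`; Gaussian elimination splits it off without changing kernel or cokernel, so by
induction kernels and cokernels of such maps are again finite sums of the bricks. These finite sums
therefore form an exact abelian subcategory containing `M`, and they lie in `add M`. Conversely
`add M ⊆ ab M`, since a retract `X` of `Y` is the kernel of the complementary idempotent of `Y`.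
-/

section Biproducts
variable {C : Type*} [Category C] [Preadditive C] [HasFiniteBiproducts C]

lemma isZero_biproduct_fin_zero (f : Fin 0 → C) : IsZero (⨁ f) :=
  (IsZero.iff_id_eq_zero _).2 (biproduct.hom_ext' _ _ fun j => j.elim0)

noncomputable def biproductIsoBiprodSuccAbove [HasBinaryBiproducts C] {a : ℕ}
    (f : Fin (a + 1) → C) (p : Fin (a + 1)) : (⨁ f) ≅ f p ⊞ ⨁ fun j => f (p.succAbove j) where
  hom := biprod.lift (biproduct.π f p) (biproduct.lift fun j => biproduct.π f (p.succAbove j))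
  inv := biprod.desc (biproduct.ι f p) (biproduct.desc fun j => biproduct.ι f (p.succAbove j))
  hom_inv_id := by
    rw [biprod.lift_desc, biproduct.lift_desc, ← biproduct.total, Fin.sum_univ_succAbove _ p]
  inv_hom_id := by
    ext j <;> simp [biproduct.ι_π, Fin.succAbove_ne, Fin.succAbove_right_injective.eq_iff]

lemma exists_ι_comp_π_ne_zero {J K : Type*} [Finite J] [Finite K] {f : J → C} {g : K → C}
    {φ : (⨁ f) ⟶ ⨁ g} (hφ : φ ≠ 0) : ∃ p q, biproduct.ι f p ≫ φ ≫ biproduct.π g q ≠ 0 := by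
  by_contra! h
  exact hφ (biproduct.hom_ext' _ _ fun p => biproduct.hom_ext _ _ fun q => by simpa using h p q)

end Biproducts

section KernelCokernel
variable {C : Type*} [Category C] [Preadditive C]

noncomputable def kernelConjIso [HasKernels C] {A A' B B' : C} (α : A' ≅ A) (f : A ⟶ B)
    (β : B ≅ B') : kernel (α.hom ≫ f ≫ β.hom) ≅ kernel f :=
  kernelIsIsoComp α.hom (f ≫ β.hom) ≪≫ kernelCompMono f β.hom

noncomputable def cokernelConjIso [HasCokernels C] {A A' B B' : C} (α : A' ≅ A) (f : A ⟶ B)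
    (β : B ≅ B') : cokernel (α.hom ≫ f ≫ β.hom) ≅ cokernel f :=
  cokernelEpiComp α.hom (f ≫ β.hom) ≪≫ cokernelCompIsIso f β.hom

noncomputable def retractIsoKernel [HasKernels C] {X Y : C} (s : X ⟶ Y) (r : Y ⟶ X)
    (h : s ≫ r = 𝟙 X) : X ≅ kernel (𝟙 Y - r ≫ s) where
  hom := kernel.lift _ s (by simp [reassoc_of% h])
  inv := kernel.ι _ ≫ r
  hom_inv_id := by simp [h]
  inv_hom_id := by
    ext
    have h := kernel.condition (𝟙 Y - r ≫ s)
    rw [Preadditive.comp_sub, Category.comp_id, sub_eq_zero] at h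
    simpa using h.symm

variable [HasBinaryBiproducts C]

noncomputable def kernelBiprodMapIso [HasKernels C] {X₁ X₂ Y₁ Y₂ : C} (f : X₁ ⟶ Y₁) (g : X₂ ⟶ Y₂)
    [IsIso f] : kernel (biprod.map f g) ≅ kernel g :=
  IsLimit.conePointUniqueUpToIso (limit.isLimit _) <|
    KernelFork.IsLimit.ofι (kernel.ι g ≫ biprod.inr) (by simp)
      (fun t ht => kernel.lift g (t ≫ biprod.snd) (by simpa using ht =≫ biprod.snd))
      (fun t ht => by
        have hfst : t ≫ biprod.fst = 0 :=
          zero_of_comp_mono f (by simpa using ht =≫ biprod.fst)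
        ext <;> simp [hfst])
      (fun t ht m hm => by
        ext
        simpa using hm =≫ biprod.snd)

noncomputable def cokernelBiprodMapIso [HasCokernels C] {X₁ X₂ Y₁ Y₂ : C} (f : X₁ ⟶ Y₁)
    (g : X₂ ⟶ Y₂) [IsIso f] : cokernel (biprod.map f g) ≅ cokernel g :=
  IsColimit.coconePointUniqueUpToIso (colimit.isColimit _) <|
    CokernelCofork.IsColimit.ofπ (biprod.snd ≫ cokernel.π g) (by simp)
      (fun t ht => cokernel.desc g (biprod.inr ≫ t) (by simpa using biprod.inr ≫= ht))
      (fun t ht => by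
        have hinl : biprod.inl ≫ t = 0 :=
          zero_of_epi_comp f (by simpa using biprod.inl ≫= ht)
        ext <;> simp [hinl])
      (fun t ht m hm => by
        ext
        simpa using biprod.inr ≫= hm)

end KernelCokernel

lemma Biprod.exists_kernel_iso_cokernel_iso {C : Type*} [Category C] [Preadditive C]
    [HasBinaryBiproducts C] [HasKernels C] [HasCokernels C] {X₁ X₂ Y₁ Y₂ : C} (f : X₁ ⊞ X₂ ⟶ Y₁ ⊞ Y₂) [IsIso (biprod.inl ≫ f ≫ biprod.fst)] :
    ∃ g : X₂ ⟶ Y₂, Nonempty (kernel f ≅ kernel g) ∧ Nonempty (cokernel f ≅ cokernel g) := by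
  obtain ⟨L, R, g, hg⟩ := Biprod.gaussian f
  exact ⟨g, ⟨(kernelConjIso L f R).symm ≪≫ kernelIsoOfEq hg ≪≫ kernelBiprodMapIso _ g⟩,
    ⟨(cokernelConjIso L f R).symm ≪≫ cokernelIsoOfEq hg ≪≫ cokernelBiprodMapIso _ g⟩⟩

section OrthogonalBricks
variable {C : Type*} [Category C] [HasZeroMorphisms C] {ι : Type*}

def IsOrthogonalBricks (B : ι → C) : Prop :=
  ∀ i j (g : B i ⟶ B j), g ≠ 0 → IsIso g

lemma IsOrthogonalBricks.of_brick_of_orthogonal {B : ι → C}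
    (hbrick : ∀ i (f : B i ⟶ B i), f ≠ 0 → IsIso f) (horth : ∀ i j, i ≠ j → ∀ f : B i ⟶ B j, f = 0) : IsOrthogonalBricks B := by
  intro i j g hg
  obtain rfl | hij := eq_or_ne i j
  · exact hbrick i g hg
  · exact absurd (horth i j hij g) hg

end OrthogonalBricks

section FiniteSums
variable {C : Type*} [Category C] [Preadditive C] [HasFiniteBiproducts C] {ι : Type*}

def IsFiniteSumOf (B : ι → C) (X : C) : Prop :=
  ∃ (c : ℕ) (w : Fin c → ι), Nonempty (X ≅ ⨁ fun j => B (w j))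

variable {B : ι → C}

lemma IsFiniteSumOf.of_iso {X Y : C} (e : X ≅ Y) (h : IsFiniteSumOf B X) : IsFiniteSumOf B Y :=
  let ⟨c, w, ⟨e'⟩⟩ := h
  ⟨c, w, ⟨e.symm ≪≫ e'⟩⟩

lemma isFiniteSumOf_of_isZero {Z : C} (hZ : IsZero Z) : IsFiniteSumOf B Z :=
  ⟨0, Fin.elim0, ⟨hZ.iso (isZero_biproduct_fin_zero _)⟩⟩

lemma isFiniteSumOf_biproduct {c : ℕ} (w : Fin c → ι) : IsFiniteSumOf B (⨁ fun j => B (w j)) :=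
  ⟨c, w, ⟨Iso.refl _⟩⟩

variable [HasBinaryBiproducts C]

lemma IsFiniteSumOf.biprod_left (i : ι) {Y : C} (h : IsFiniteSumOf B Y) :
    IsFiniteSumOf B (B i ⊞ Y) := by
  obtain ⟨c, w, ⟨e⟩⟩ := h
  let w' : Fin (c + 1) → ι := Fin.cons i w
  refine ⟨c + 1, w', ⟨?_⟩⟩
  refine biprod.mapIso (Iso.refl _) (e ≪≫ biproduct.mapIso fun j => eqToIso ?_) ≪≫
    (biproductIsoBiprodSuccAbove (fun j => B (w' j)) 0).symm
  simp [w']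

lemma IsFiniteSumOf.biprod {X Y : C} (hX : IsFiniteSumOf B X) (hY : IsFiniteSumOf B Y) :
    IsFiniteSumOf B (X ⊞ Y) := by
  obtain ⟨c, w, ⟨e⟩⟩ := hX
  refine IsFiniteSumOf.of_iso (biprod.mapIso e (Iso.refl Y)).symm ?_
  clear e
  induction c with
  | zero => exact hY.of_iso (isoZeroBiprod (isZero_biproduct_fin_zero _))
  | succ c ih =>
    exact IsFiniteSumOf.of_iso (biprod.mapIso (biproductIsoBiprodSuccAbove _ 0) (Iso.refl Y) ≪≫
      biprod.associator _ _ _).symm ((ih _).biprod_left (w 0))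

end FiniteSums

section KernelsOfFiniteSums
variable {C : Type*} [Category C] [Abelian C] {ι : Type*} {B : ι → C}

lemma isFiniteSumOf_kernel_cokernel_zero {X Y : C} (hX : IsFiniteSumOf B X)
    (hY : IsFiniteSumOf B Y) :
    IsFiniteSumOf B (kernel (0 : X ⟶ Y)) ∧ IsFiniteSumOf B (cokernel (0 : X ⟶ Y)) :=
  ⟨hX.of_iso kernelZeroIsoSource.symm, hY.of_iso cokernelZeroIsoTarget.symm⟩

lemma IsOrthogonalBricks.kernel_cokernel_biproduct (hB : IsOrthogonalBricks B) {a b : ℕ}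
    (u : Fin a → ι) (v : Fin b → ι) (f : (⨁ fun j => B (u j)) ⟶ ⨁ fun j => B (v j)) :
    IsFiniteSumOf B (kernel f) ∧ IsFiniteSumOf B (cokernel f) := by
  induction a generalizing b with
  | zero =>
    obtain rfl : f = 0 := biproduct.hom_ext' _ _ fun j => j.elim0
    exact isFiniteSumOf_kernel_cokernel_zero (isFiniteSumOf_biproduct u) (isFiniteSumOf_biproduct v)
  | succ a ih =>
    rcases eq_or_ne f 0 with rfl | hf
    · exact isFiniteSumOf_kernel_cokernel_zero (isFiniteSumOf_biproduct u)
        (isFiniteSumOf_biproduct v)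
    obtain ⟨p, q, hpq⟩ := exists_ι_comp_π_ne_zero hf
    obtain _ | b := b
    · exact q.elim0
    let eu := biproductIsoBiprodSuccAbove (fun j => B (u j)) p
    let ev := biproductIsoBiprodSuccAbove (fun j => B (v j)) q
    have hentry : IsIso (biprod.inl ≫ (eu.inv ≫ f ≫ ev.hom) ≫ biprod.fst) := by
      convert hB _ _ _ hpq using 1
      simp [eu, ev, biproductIsoBiprodSuccAbove]
    obtain ⟨g, ⟨eK⟩, ⟨eC⟩⟩ := Biprod.exists_kernel_iso_cokernel_iso (eu.inv ≫ f ≫ ev.hom)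
    obtain ⟨hK, hC⟩ := ih _ _ g
    exact ⟨hK.of_iso ((kernelConjIso eu.symm f ev).symm ≪≫ eK).symm,
      hC.of_iso ((cokernelConjIso eu.symm f ev).symm ≪≫ eC).symm⟩

lemma IsOrthogonalBricks.kernel_cokernel (hB : IsOrthogonalBricks B) {X Y : C}
    (hX : IsFiniteSumOf B X) (hY : IsFiniteSumOf B Y) (f : X ⟶ Y) :
    IsFiniteSumOf B (kernel f) ∧ IsFiniteSumOf B (cokernel f) := by
  obtain ⟨a, u, ⟨eX⟩⟩ := hX
  obtain ⟨b, v, ⟨eY⟩⟩ := hY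
  obtain ⟨hK, hC⟩ := hB.kernel_cokernel_biproduct u v (eX.inv ≫ f ≫ eY.hom)
  exact ⟨hK.of_iso (kernelConjIso eX.symm f eY), hC.of_iso (cokernelConjIso eX.symm f eY)⟩

lemma IsOrthogonalBricks.isExactAbelianSub (hB : IsOrthogonalBricks B) :
    IsExactAbelianSub (IsFiniteSumOf B) where
  iso e h := h.of_iso e
  zero _ hZ := isFiniteSumOf_of_isZero hZ
  ker f hX hY := (hB.kernel_cokernel hX hY f).1
  coker f hX hY := (hB.kernel_cokernel hX hY f).2
  sum := IsFiniteSumOf.biprod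

end KernelsOfFiniteSums

section AddSubcategory
variable {C : Type*} [Category C] [Abelian C]

lemma IsExactAbelianSub.biproduct {P : C → Prop} (hP : IsExactAbelianSub P) {m : ℕ}
    {X : Fin m → C} (h : ∀ j, P (X j)) : P (⨁ X) := by
  induction m with
  | zero => exact hP.zero _ (isZero_biproduct_fin_zero X)
  | succ m ih =>
    exact hP.iso (biproductIsoBiprodSuccAbove X 0).symm (hP.sum (h 0) (ih fun _ => h _))

lemma IsExactAbelianSub.of_retract {P : C → Prop} (hP : IsExactAbelianSub P) {X Y : C}
    (s : X ⟶ Y) (r : Y ⟶ X) (h : s ≫ r = 𝟙 X) (hY : P Y) : P X :=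
  hP.iso (retractIsoKernel s r h).symm (hP.ker _ hY hY)

lemma abSub_of_catInAdd {M X : C} (h : CatInAdd M X) : abSub M X := fun _ hP hM =>
  let ⟨_, s, r, hsr⟩ := h
  hP.of_retract s r hsr (hP.biproduct fun _ => hM)

variable {ι : Type*} [Finite ι] {B : ι → C}

lemma isFiniteSumOf_biproduct_self (B : ι → C) : IsFiniteSumOf B (⨁ B) :=
  let e := Finite.equivFin ι
  ⟨_, e.symm, ⟨biproduct.whiskerEquiv e fun i => eqToIso (by simp)⟩⟩

lemma IsFiniteSumOf.catInAdd_biproduct {X : C} (h : IsFiniteSumOf B X) : CatInAdd (⨁ B) X := by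
  obtain ⟨c, w, ⟨e⟩⟩ := h
  refine ⟨c, e.hom ≫ biproduct.map fun j => biproduct.ι B (w j),
    (biproduct.map fun j => biproduct.π B (w j)) ≫ e.inv, ?_⟩
  have : ((biproduct.map fun j => biproduct.ι B (w j)) ≫
      biproduct.map fun j => biproduct.π B (w j)) = 𝟙 _ := by
    ext
    simp
  simp [reassoc_of% this]

lemma IsOrthogonalBricks.catInAdd_biproduct_iff (hB : IsOrthogonalBricks B) {X : C} :
    CatInAdd (⨁ B) X ↔ IsFiniteSumOf B X :=
  ⟨fun h => abSub_of_catInAdd h _ hB.isExactAbelianSub (isFiniteSumOf_biproduct_self B),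
    IsFiniteSumOf.catInAdd_biproduct⟩

lemma IsOrthogonalBricks.abSub_biproduct_iff (hB : IsOrthogonalBricks B) {X : C} :
    abSub (⨁ B) X ↔ CatInAdd (⨁ B) X :=
  ⟨fun h => (h _ hB.isExactAbelianSub (isFiniteSumOf_biproduct_self B)).catInAdd_biproduct,
    abSub_of_catInAdd⟩

end AddSubcategory

section Stmt9
open CategoryTheory Limits

theorem ab_eq_add_of_orthogonal_bricks_general
    (Λ : Type) [Ring Λ]
    (n : ℕ) (B : Fin n → ModuleCat Λ)
    (hbrick : ∀ (i : Fin n) (f : B i ⟶ B i), f ≠ 0 → IsIso f)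
    (horth : ∀ (i j : Fin n), i ≠ j → ∀ f : B i ⟶ B j, f = 0) :
    (∀ X : ModuleCat Λ, abSub (⨁ B) X ↔ CatInAdd (⨁ B) X) ∧
    IsExactAbelianSub (CatInAdd (⨁ B)) ∧
    (∀ X : ModuleCat Λ, CatInAdd (⨁ B) X →
      ∃ (m : ℕ) (g : Fin m → ModuleCat Λ),
        (∀ j, ∃ i, Nonempty (g j ≅ B i)) ∧ Nonempty (X ≅ ⨁ g)) := by
  have hB : IsOrthogonalBricks B := .of_brick_of_orthogonal hbrick horth
  have hadd : CatInAdd (⨁ B) = IsFiniteSumOf B := funext fun _ => propext hB.catInAdd_biproduct_iff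
  refine ⟨fun _ => hB.abSub_biproduct_iff, hadd ▸ hB.isExactAbelianSub, fun X hX => ?_⟩
  obtain ⟨c, w, ⟨e⟩⟩ := hB.catInAdd_biproduct_iff.1 hX
  exact ⟨c, fun j => B (w j), fun j => ⟨w j, ⟨Iso.refl _⟩⟩, ⟨e⟩⟩

/-- If `M = B₁ ⊕ ⋯ ⊕ Bₙ` is a finite direct sum of pairwise orthogonal
bricks over a finite-dimensional algebra `Λ` (every nonzero endomorphism of each `Bᵢ` is
invertible, and `Hom(Bᵢ, Bⱼ) = 0` for `i ≠ j`), then the smallest exact abelian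
subcategory containing `M` is `add M`; in particular `add M` is an exact abelian
(semisimple) subcategory of `mod Λ`, every object of it being a finite direct sum
of copies of the bricks `Bᵢ`. -/
theorem ab_eq_add_of_orthogonal_bricks
    (k : Type) [Field k] (Λ : Type) [Ring Λ] [Algebra k Λ] [FiniteDimensional k Λ]
    (n : ℕ) (B : Fin n → ModuleCat Λ)
    (hbrick : ∀ (i : Fin n) (f : B i ⟶ B i), f ≠ 0 → IsIso f)
    (horth : ∀ (i j : Fin n), i ≠ j → ∀ f : B i ⟶ B j, f = 0) :
    (∀ X : ModuleCat Λ, abSub (⨁ B) X ↔ CatInAdd (⨁ B) X) ∧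
    IsExactAbelianSub (CatInAdd (⨁ B)) ∧
    (∀ X : ModuleCat Λ, CatInAdd (⨁ B) X →
      ∃ (m : ℕ) (g : Fin m → ModuleCat Λ),
        (∀ j, ∃ i, Nonempty (g j ≅ B i)) ∧ Nonempty (X ≅ ⨁ g)) :=
  ab_eq_add_of_orthogonal_bricks_general Λ n B hbrick horth

end Stmt9
end

section
/- Let Λ be a finite-dimensional algebra and M a faithful Λ-module such that ab(M) contains all simple Λ-modules. Then ab(M) = mod Λ. -/
open CategoryTheory Limits

/-!
Since `Λ` is artinian and `M` is faithful, finitely many elements `m₁, …, mₜ` of `M` already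
have zero common annihilator, so `a ↦ (a • mᵢ)ᵢ` embeds `Λ` into `Mᵗ`. Every finitely generated
module is a quotient of some `Λⁿ ⊆ Mⁿᵗ`. It therefore suffices that `ab M` is closed under
submodules and quotients of finite length modules in it; for submodules this is descending
induction, since a submodule `N ≠ ⊤` is the kernel of a map from a larger submodule `N'` onto the
simple module `N' / N`, which lies in `ab M` by assumption.
-/

section Stmt10
open CategoryTheory Limits

theorem isExactAbelianSub_abSub {C : Type*} [Category C] [Abelian C] (M : C) :
    IsExactAbelianSub (abSub M) where
  iso e h := fun P hP hM => hP.iso e (h P hP hM)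
  zero Z hZ := fun P hP _ => hP.zero Z hZ
  ker f hX hY := fun P hP hM => hP.ker f (hX P hP hM) (hY P hP hM)
  coker f hX hY := fun P hP hM => hP.coker f (hX P hP hM) (hY P hP hM)
  sum hX hY := fun P hP hM => hP.sum (hX P hP hM) (hY P hP hM)

theorem abSub_self {C : Type*} [Category C] [Abelian C] (M : C) : abSub M M :=
  fun _ _ hM => hM

section Modules

universe u v

variable {Λ : Type u} [Ring Λ] {M : ModuleCat.{v} Λ} {A B : Type v}
  [AddCommGroup A] [Module Λ A] [AddCommGroup B] [Module Λ B]

theorem abSub_of_linearEquiv (e : A ≃ₗ[Λ] B) (hA : abSub M (ModuleCat.of Λ A)) :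
    abSub M (ModuleCat.of Λ B) :=
  (isExactAbelianSub_abSub M).iso e.toModuleIso hA

theorem abSub_ker (f : A →ₗ[Λ] B) (hA : abSub M (ModuleCat.of Λ A))
    (hB : abSub M (ModuleCat.of Λ B)) : abSub M (ModuleCat.of Λ (LinearMap.ker f)) :=
  (isExactAbelianSub_abSub M).iso (ModuleCat.kernelIsoKer _)
    ((isExactAbelianSub_abSub M).ker (ModuleCat.ofHom f) hA hB)

theorem abSub_quotient (N : Submodule Λ A) (hA : abSub M (ModuleCat.of Λ A))
    (hN : abSub M (ModuleCat.of Λ N)) : abSub M (ModuleCat.of Λ (A ⧸ N)) := by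
  have hcoker : abSub M (ModuleCat.of Λ (A ⧸ LinearMap.range N.subtype)) :=
    (isExactAbelianSub_abSub M).iso (ModuleCat.cokernelIsoRangeQuotient _)
      ((isExactAbelianSub_abSub M).coker (ModuleCat.ofHom N.subtype) hN hA)
  exact abSub_of_linearEquiv (Submodule.quotEquivOfEq _ _ N.range_subtype) hcoker

theorem abSub_prod (hA : abSub M (ModuleCat.of Λ A)) (hB : abSub M (ModuleCat.of Λ B)) :
    abSub M (ModuleCat.of Λ (A × B)) :=
  (isExactAbelianSub_abSub M).iso (ModuleCat.biprodIsoProd _ _)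
    ((isExactAbelianSub_abSub M).sum hA hB)

theorem abSub_pi_fin (hA : abSub M (ModuleCat.of Λ A)) :
    ∀ n : ℕ, abSub M (ModuleCat.of Λ (Fin n → A))
  | 0 => (isExactAbelianSub_abSub M).zero _ (ModuleCat.isZero_of_subsingleton _)
  | n + 1 => abSub_of_linearEquiv (Fin.consLinearEquiv Λ fun _ => A)
      (abSub_prod hA (abSub_pi_fin hA n))

theorem abSub_pi {ι : Type v} [Finite ι] (hA : abSub M (ModuleCat.of Λ A)) :
    abSub M (ModuleCat.of Λ (ι → A)) :=
  abSub_of_linearEquiv (LinearEquiv.funCongrLeft Λ A (Finite.equivFin ι))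
    (abSub_pi_fin hA (Nat.card ι))

variable (hsimples : ∀ S : ModuleCat.{v} Λ, IsSimpleModule Λ S → abSub M S)
include hsimples

theorem abSub_submodule [IsNoetherian Λ A] [IsArtinian Λ A] (hA : abSub M (ModuleCat.of Λ A))
    (N : Submodule Λ A) : abSub M (ModuleCat.of Λ N) := by
  induction N using WellFoundedGT.induction with
  | _ N ih =>
    obtain rfl | hN := eq_or_ne N ⊤
    · exact abSub_of_linearEquiv Submodule.topEquiv.symm hA
    obtain ⟨N', hNN', -⟩ := exists_covBy_le_of_lt hN.lt_top
    have hsimple : IsSimpleModule Λ (N' ⧸ N.comap N'.subtype) :=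
      (covBy_iff_quot_is_simple hNN'.le).mp hNN'
    have hker := abSub_ker (N.comap N'.subtype).mkQ (ih N' hNN'.lt)
      (hsimples (ModuleCat.of Λ _) hsimple)
    rw [Submodule.ker_mkQ] at hker
    exact abSub_of_linearEquiv (Submodule.comapSubtypeEquivOfLe hNN'.le) hker

theorem abSub_of_surjective [IsNoetherian Λ A] [IsArtinian Λ A]
    (hA : abSub M (ModuleCat.of Λ A)) (f : A →ₗ[Λ] B) (hf : Function.Surjective f) :
    abSub M (ModuleCat.of Λ B) :=
  abSub_of_linearEquiv (f.quotKerEquivOfSurjective hf)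
    (abSub_quotient _ hA (abSub_submodule hsimples hA _))

end Modules

theorem exists_finset_injective_pi_toSpanSingleton (R M : Type*) [Ring R] [IsArtinianRing R]
    [AddCommGroup M] [Module R M] [FaithfulSMul R M] :
    ∃ s : Finset M, Function.Injective
      (LinearMap.pi fun m : s => LinearMap.toSpanSingleton R M m) := by
  classical
  let ann (s : Finset M) : Submodule R R := s.inf fun m => LinearMap.ker (.toSpanSingleton R M m)
  obtain ⟨_, ⟨s, rfl⟩, hmin⟩ := IsArtinian.set_has_minimal (Set.range ann) (Set.range_nonempty _)
  have hann (m : M) : ann s ≤ LinearMap.ker (.toSpanSingleton R M m) := by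
    have hle : ann (insert m s) ≤ ann s := Finset.inf_mono (s.subset_insert m)
    have heq : ann (insert m s) = ann s :=
      by_contra fun hne => hmin _ ⟨insert m s, rfl⟩ (hle.lt_of_ne hne)
    exact heq ▸ Finset.inf_le (s.mem_insert_self m)
  refine ⟨s, (injective_iff_map_eq_zero _).mpr fun a ha => ?_⟩
  have has : a ∈ ann s := by
    simpa [ann, Submodule.mem_finsetInf] using fun m hm => congrFun ha ⟨m, hm⟩
  exact eq_of_smul_eq_smul fun m => by rw [zero_smul]; simpa using hann m has

theorem abSub_of_finite_of_faithfulSMul {Λ : Type*} [Ring Λ] [IsArtinianRing Λ]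
    {M : ModuleCat Λ} [Module.Finite Λ M] [FaithfulSMul Λ M]
    (hsimples : ∀ S : ModuleCat Λ, IsSimpleModule Λ S → abSub M S)
    (X : ModuleCat Λ) [Module.Finite Λ X] : abSub M X := by
  obtain ⟨s, hs⟩ := exists_finset_injective_pi_toSpanSingleton Λ M
  obtain ⟨n, π, hπ⟩ := Module.Finite.exists_fin' Λ X
  let ι := (LinearMap.pi fun m : s => LinearMap.toSpanSingleton Λ M m).compLeft (Fin n)
  have hι : Function.Injective ι := hs.comp_left
  have hpow : abSub M (ModuleCat.of Λ (Fin n → s → M)) :=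
    abSub_pi_fin (abSub_pi (A := M) (abSub_self M)) n
  exact abSub_of_surjective hsimples (abSub_submodule hsimples hpow (LinearMap.range ι))
    (π ∘ₗ (LinearEquiv.ofInjective ι hι).symm.toLinearMap)
    (hπ.comp (LinearEquiv.ofInjective ι hι).symm.surjective)

/-- Let `Λ` be a finite-dimensional algebra and `M` a faithful
finite-dimensional `Λ`-module such that `ab M` contains all simple `Λ`-modules.
Then `ab M = mod Λ`, i.e. every finite-dimensional `Λ`-module belongs to `ab M`. -/
theorem ab_eq_mod_of_faithful_containing_simples
    (k : Type) [Field k] (Λ : Type) [Ring Λ] [Algebra k Λ] [FiniteDimensional k Λ]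
    (M : ModuleCat Λ) (hfin : Module.Finite Λ M) (hfaithful : FaithfulSMul Λ M)
    (hsimples : ∀ S : ModuleCat Λ, IsSimpleModule Λ S → abSub M S) :
    ∀ X : ModuleCat Λ, Module.Finite Λ X → abSub M X := by
  have : IsArtinianRing Λ := .of_finite k Λ
  have := hfin
  have := hfaithful
  intro X _
  exact abSub_of_finite_of_faithfulSMul hsimples X

end Stmt10
end
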